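/- Let p₀ be a probability density on R^d and define the noised density p_t(θ_t) = ∫ N(θ_t | θ₀, σ(t)² I) p₀(θ₀) dθ₀. Let r: R^d → [0,∞) be measurable with ∫ r(θ₀) p₀(θ₀) dθ₀ < ∞, and define the reweighted density q₀(θ₀) ∝ r(θ₀) p₀(θ₀) with noised version q_t(θ_t) = ∫ N(θ_t | θ₀, σ(t)² I) q₀(θ₀) dθ₀. Then q_t(θ_t) ∝ p_t(θ_t) · E_{p(θ₀|θ_t)}[r(θ₀)], where p(θ₀|θ_t) = N(θ_t | θ₀, σ(t)² I) p₀(θ₀) / p_t(θ_t), and consequently ∇_{θ_t} log q_t(θ_t) = ∇_{θ_t} log p_t(θ_t) + ∇_{θ_t} log E_{p(θ₀|θ_t)}[r(θ₀)] wherever the densities are positive and differentiable. -/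

import Mathlib

/-!
Both `q_t` and `p_t · E[r | θ_t]` are multiples of `I(θ_t) = ∫ N(θ_t | θ₀, σ² I) r(θ₀) p₀(θ₀) dθ₀`:
`q_t = I / Z` and `E[r | θ_t] = I / p_t`. Hence `log q_t = log p_t + log E[r | θ_t] - log Z` wherever
`p_t` and `I` do not vanish. Since the Gaussian kernel is bounded and continuous, dominated
convergence makes `p_t` and `I` continuous, so this identity holds on a neighbourhood of any point
where `p_t, E[r | θ_t] > 0`, and the scores add.
-/

open MeasureTheory

/-- Multivariate Gaussian density `N(x | μ, Σ)` on `ℝ^d`. -/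
noncomputable def gaussDensity {d : ℕ} (μ : EuclideanSpace ℝ (Fin d))
    (S : Matrix (Fin d) (Fin d) ℝ) (x : EuclideanSpace ℝ (Fin d)) : ℝ :=
  (2 * Real.pi) ^ (-(d : ℝ) / 2) * S.det ^ (-(1 : ℝ) / 2) *
    Real.exp (-(1 / 2) *
      dotProduct (fun i => x i - μ i) (S⁻¹.mulVec fun i => x i - μ i))

open Filter Topology

section Gaussian

variable {d : ℕ}

theorem continuous_gaussDensity (S : Matrix (Fin d) (Fin d) ℝ) :
    Continuous fun p : EuclideanSpace ℝ (Fin d) × EuclideanSpace ℝ (Fin d) =>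
      gaussDensity p.1 S p.2 := by
  unfold gaussDensity
  simp only [dotProduct, Matrix.mulVec]
  fun_prop

theorem norm_gaussDensity_le {S : Matrix (Fin d) (Fin d) ℝ} (hS : S.PosDef)
    (μ x : EuclideanSpace ℝ (Fin d)) :
    ‖gaussDensity μ S x‖ ≤ (2 * Real.pi) ^ (-(d : ℝ) / 2) * S.det ^ (-(1 : ℝ) / 2) := by
  have hquad : 0 ≤ dotProduct (fun i => x i - μ i) (S⁻¹.mulVec fun i => x i - μ i) :=
    hS.inv.posSemidef.dotProduct_mulVec_nonneg _
  have hexp : Real.exp (-(1 / 2) *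
      dotProduct (fun i => x i - μ i) (S⁻¹.mulVec fun i => x i - μ i)) ≤ 1 :=
    Real.exp_le_one_iff.2 (by linarith)
  have hc : 0 ≤ (2 * Real.pi) ^ (-(d : ℝ) / 2) * S.det ^ (-(1 : ℝ) / 2) := by
    have := hS.det_pos
    positivity
  rw [gaussDensity, Real.norm_of_nonneg (by positivity)]
  exact mul_le_of_le_one_right hc hexp

end Gaussian

theorem continuous_integral_kernel_mul {X Y : Type*} [TopologicalSpace X]
    [FirstCountableTopology X] [MeasurableSpace Y] {μ : Measure Y} {K : X → Y → ℝ} {C : ℝ}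
    (hK_meas : ∀ x, AEStronglyMeasurable (K x) μ) (hK_le : ∀ x y, ‖K x y‖ ≤ C)
    (hK_cont : ∀ y, Continuous (K · y)) {f : Y → ℝ} (hf : Integrable f μ) :
    Continuous fun x => ∫ y, K x y * f y ∂μ :=
  continuous_of_dominated (fun x => (hK_meas x).mul hf.aestronglyMeasurable)
    (fun x => ae_of_all _ fun y => by
      rw [norm_mul]; exact mul_le_mul_of_nonneg_right (hK_le x y) (norm_nonneg _))
    (hf.norm.const_mul C) (ae_of_all _ fun y => (hK_cont y).mul continuous_const)

theorem gradient_log_div_const_eq_add {E : Type*} [NormedAddCommGroup E]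
    [InnerProductSpace ℝ E] [CompleteSpace E] {p I : E → ℝ} {Z : ℝ} {x : E}
    (hp : ContinuousAt p x) (hI : ContinuousAt I x) (hpx : p x ≠ 0) (hIx : I x ≠ 0) (hZ : Z ≠ 0)
    (hdp : DifferentiableAt ℝ (fun y => Real.log (p y)) x)
    (hdE : DifferentiableAt ℝ (fun y => Real.log (I y / p y)) x) :
    gradient (fun y => Real.log (I y / Z)) x =
      gradient (fun y => Real.log (p y)) x + gradient (fun y => Real.log (I y / p y)) x := by
  have hlog : (fun y => Real.log (I y / Z)) =ᶠ[𝓝 x]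
      fun y => Real.log (p y) + Real.log (I y / p y) - Real.log Z := by
    filter_upwards [hp.eventually_ne hpx, hI.eventually_ne hIx] with y hpy hIy
    rw [Real.log_div hIy hZ, Real.log_div hIy hpy]
    ring
  rw [hlog.gradient_eq]
  unfold gradient
  rw [fderiv_sub_const, fderiv_fun_add hdp hdE, map_add]

theorem score_decomposition_reweighted_diffusion_general {d : ℕ}
    (σt : ℝ) (hσt : 0 < σt)
    (p0 r : EuclideanSpace ℝ (Fin d) → ℝ)
    (hp0_int : ∫ θ, p0 θ = 1)
    (Z : ℝ) (hZ_pos : 0 < Z)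
    (hZ_int : Integrable (fun θ => r θ * p0 θ)) :
    -- forward (noising) kernel N(θ_t | θ₀, σ(t)² I)
    let K : EuclideanSpace ℝ (Fin d) → EuclideanSpace ℝ (Fin d) → ℝ :=
      fun θt θ0 => gaussDensity θ0 ((σt ^ 2) • (1 : Matrix (Fin d) (Fin d) ℝ)) θt
    -- noised original density p_t
    let pt : EuclideanSpace ℝ (Fin d) → ℝ := fun θt => ∫ θ0, K θt θ0 * p0 θ0
    -- noised reweighted density q_t with q₀ = r·p₀ / Z
    let qt : EuclideanSpace ℝ (Fin d) → ℝ :=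
      fun θt => ∫ θ0, K θt θ0 * (r θ0 * p0 θ0 / Z)
    -- E_{p(θ₀|θ_t)}[r(θ₀)] with p(θ₀|θ_t) = K θ_t θ₀ · p₀(θ₀) / p_t(θ_t)
    let Efun : EuclideanSpace ℝ (Fin d) → ℝ :=
      fun θt => ∫ θ0, r θ0 * (K θt θ0 * p0 θ0 / pt θt)
    (∀ θt, 0 < pt θt → qt θt = (1 / Z) * (pt θt * Efun θt)) ∧
    (∀ θt, 0 < pt θt → 0 < Efun θt →
      DifferentiableAt ℝ (fun θ => Real.log (pt θ)) θt →
      DifferentiableAt ℝ (fun θ => Real.log (Efun θ)) θt →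
      gradient (fun θ => Real.log (qt θ)) θt =
        gradient (fun θ => Real.log (pt θ)) θt +
          gradient (fun θ => Real.log (Efun θ)) θt) := by
  intro K pt qt Efun
  have hS : ((σt ^ 2) • (1 : Matrix (Fin d) (Fin d) ℝ)).PosDef :=
    Matrix.PosDef.one.smul (by positivity)
  have hK : Continuous fun p : _ × _ => K p.1 p.2 :=
    (continuous_gaussDensity _).comp continuous_swap
  have hK_cont : ∀ θ0, Continuous (K · θ0) := fun θ0 => hK.comp (.prodMk_left θ0)
  have hK_meas : ∀ θt, AEStronglyMeasurable (K θt) :=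
    fun θt => (hK.comp (.prodMk_right θt)).aestronglyMeasurable
  have hK_le := fun θt θ0 => norm_gaussDensity_le hS θ0 θt
  have hp0 : Integrable p0 := .of_integral_ne_zero (by rw [hp0_int]; exact one_ne_zero)
  set I := fun θt => ∫ θ0, K θt θ0 * (r θ0 * p0 θ0)
  have hpt_cont : Continuous pt := continuous_integral_kernel_mul hK_meas hK_le hK_cont hp0
  have hI_cont : Continuous I := continuous_integral_kernel_mul hK_meas hK_le hK_cont hZ_int
  have hqt : qt = fun θt => I θt / Z := funext fun θt => by
    simp only [qt, I, ← integral_div, mul_div_assoc]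
  have hEfun : Efun = fun θt => I θt / pt θt := funext fun θt => by
    simp only [Efun, I, ← integral_div]
    congr 1 with θ0
    ring
  refine ⟨fun θt hpt => ?_, fun θt hpt hE hdp hdE => ?_⟩
  · rw [hqt, hEfun]
    field_simp
  · rw [hEfun] at hE hdE ⊢
    rw [hqt]
    exact gradient_log_div_const_eq_add hpt_cont.continuousAt hI_cont.continuousAt hpt.ne'
      (div_ne_zero_iff.1 hE.ne').1 hZ_pos.ne' hdp hdE

/-- score decomposition for the reweighted noised density. -/
theorem score_decomposition_reweighted_diffusion {d : ℕ}
    (σt : ℝ) (hσt : 0 < σt)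
    (p0 r : EuclideanSpace ℝ (Fin d) → ℝ)
    (hp0_nn : ∀ θ, 0 ≤ p0 θ) (hp0_int : ∫ θ, p0 θ = 1)
    (hr_meas : Measurable r) (hr_nn : ∀ θ, 0 ≤ r θ)
    (Z : ℝ) (hZ : Z = ∫ θ, r θ * p0 θ) (hZ_pos : 0 < Z)
    (hZ_int : Integrable (fun θ => r θ * p0 θ)) :
    -- forward (noising) kernel N(θ_t | θ₀, σ(t)² I)
    let K : EuclideanSpace ℝ (Fin d) → EuclideanSpace ℝ (Fin d) → ℝ :=
      fun θt θ0 => gaussDensity θ0 ((σt ^ 2) • (1 : Matrix (Fin d) (Fin d) ℝ)) θt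
    -- noised original density p_t
    let pt : EuclideanSpace ℝ (Fin d) → ℝ := fun θt => ∫ θ0, K θt θ0 * p0 θ0
    -- noised reweighted density q_t with q₀ = r·p₀ / Z
    let qt : EuclideanSpace ℝ (Fin d) → ℝ :=
      fun θt => ∫ θ0, K θt θ0 * (r θ0 * p0 θ0 / Z)
    -- E_{p(θ₀|θ_t)}[r(θ₀)] with p(θ₀|θ_t) = K θ_t θ₀ · p₀(θ₀) / p_t(θ_t)
    let Efun : EuclideanSpace ℝ (Fin d) → ℝ :=
      fun θt => ∫ θ0, r θ0 * (K θt θ0 * p0 θ0 / pt θt)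
    (∀ θt, 0 < pt θt → qt θt = (1 / Z) * (pt θt * Efun θt)) ∧
    (∀ θt, 0 < pt θt → 0 < Efun θt →
      DifferentiableAt ℝ (fun θ => Real.log (pt θ)) θt →
      DifferentiableAt ℝ (fun θ => Real.log (Efun θ)) θt →
      gradient (fun θ => Real.log (qt θ)) θt =
        gradient (fun θ => Real.log (pt θ)) θt +
          gradient (fun θ => Real.log (Efun θ)) θt) :=
  score_decomposition_reweighted_diffusion_general σt hσt p0 r hp0_int Z hZ_pos hZ_int
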